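/- arXiv:0912.4748 — 4 statements merged into one kernel-verified Lean document; each statement's English description precedes it below -/
import Mathlib

section
/- Let X ⊆ Y be elements of (Z_p ∪ {0})^n, not all zero, with alt(X) = alt(Y). Then the first nonzero entry of X equals the first nonzero entry of Y. -/
/-- `altOf X` is the maximum length of a subsequence of the nonzero (i.e. `some`)
entries of `X` in which any two consecutive terms are distinct. -/
noncomputable def altOf {α : Type*} {n : ℕ} (X : Fin n → Option α) : ℕ :=
  sSup {m | ∃ l : List α, l.Chain' (· ≠ ·) ∧ l.Sublist ((List.ofFn X).filterMap id) ∧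
    l.length = m}

/-!
If the first nonzero entries `a` of `X` and `b` of `Y` differed, the nonzero entries of `X`
would form a sublist of those of `Y` after `b`. Take a longest alternating subsequence `L` of
`X`. If `L` does not start with `b`, then `b :: L` is alternating in `Y`; if it does, then `L`
does not use the leading `a`, and `a :: L` is alternating in `X`. Either way
`alt(X) < alt(Y)`.
-/

namespace List

variable {α : Type*}

noncomputable def alt (l : List α) : ℕ :=
  sSup {m | ∃ s : List α, s.IsChain (· ≠ ·) ∧ s.Sublist l ∧ s.length = m}

theorem bddAbove_alt_set (l : List α) :
    BddAbove {m | ∃ s : List α, s.IsChain (· ≠ ·) ∧ s.Sublist l ∧ s.length = m} :=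
  ⟨l.length, by rintro _ ⟨s, -, hs, rfl⟩; exact hs.length_le⟩

theorem length_le_alt {s l : List α} (hs : s.IsChain (· ≠ ·)) (hsl : s.Sublist l) :
    s.length ≤ l.alt :=
  le_csSup (bddAbove_alt_set l) ⟨s, hs, hsl, rfl⟩

theorem exists_isChain_sublist_length_eq_alt (l : List α) :
    ∃ s : List α, s.IsChain (· ≠ ·) ∧ s.Sublist l ∧ s.length = l.alt :=
  Nat.sSup_mem ⟨0, by exact ⟨[], isChain_nil, nil_sublist l, rfl⟩⟩ (bddAbove_alt_set l)

theorem head_eq_of_cons_sublist_cons_of_alt_eq {a b : α} {s t : List α}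
    (hsub : (a :: s).Sublist (b :: t)) (halt : (a :: s).alt = (b :: t).alt) : a = b := by
  by_contra hab
  have hsub_t : (a :: s).Sublist t := hsub.of_cons_of_ne hab
  obtain ⟨L, hchain, hL, hlen⟩ := exists_isChain_sublist_length_eq_alt (a :: s)
  have hpos : 0 < L.length := hlen ▸ length_le_alt (isChain_singleton a) (by simp)
  obtain ⟨c, L, rfl⟩ := exists_cons_of_length_pos hpos
  by_cases hcb : c = b
  · subst hcb
    have : (a :: c :: L).length ≤ (a :: s).alt :=
      length_le_alt (hchain.cons_cons hab) ((hL.of_cons_of_ne (Ne.symm hab)).cons_cons a)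
    simp only [length_cons] at this hlen
    omega
  · have : (b :: c :: L).length ≤ (b :: t).alt :=
      length_le_alt (hchain.cons_cons (Ne.symm hcb)) ((hL.trans hsub_t).cons_cons b)
    simp only [length_cons] at this hlen
    omega

theorem filterMap_sublist_filterMap_of_forall {ι β : Type*} {f g : ι → Option β}
    (h : ∀ i, f i ≠ none → g i = f i) (l : List ι) :
    (l.filterMap f).Sublist (l.filterMap g) := by
  induction l with
  | nil => simp
  | cons i l ih =>
    rcases hfi : f i with _ | b
    · rw [filterMap_cons_none hfi]
      rcases hgi : g i with _ | c
      · simpa [filterMap_cons_none hgi] using ih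
      · simpa [filterMap_cons_some hgi] using ih.cons c
    · rw [filterMap_cons_some hfi, filterMap_cons_some ((h i (by simp [hfi])).trans hfi)]
      exact ih.cons_cons b

theorem exists_filterMap_id_eq_cons {l : List (Option α)} {i : ℕ} {a : α}
    (hi : i < l.length) (hla : l[i] = some a) (hpre : ∀ j (hj : j < i), l[j] = none) :
    ∃ s, l.filterMap id = a :: s := by
  induction l generalizing i with
  | nil => simp at hi
  | cons x l ih =>
    cases i with
    | zero => exact ⟨_, filterMap_cons_some hla⟩
    | succ i =>
      rw [filterMap_cons_none (hpre 0 (Nat.succ_pos i))]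
      exact ih (by simpa using hi) hla fun j hj => hpre (j + 1) (by omega)

end List

theorem altOf_eq_alt {α : Type*} {n : ℕ} (X : Fin n → Option α) :
    altOf X = ((List.ofFn X).filterMap id).alt :=
  rfl

theorem stmt_4_general (p n : ℕ) (X Y : Fin n → Option (Fin p))
    (hsub : ∀ i, X i ≠ none → Y i = X i)
    (halt : altOf X = altOf Y)
    (i i' : Fin n)
    (hi : X i ≠ none ∧ ∀ j, j < i → X j = none)
    (hi' : Y i' ≠ none ∧ ∀ j, j < i' → Y j = none) :
    X i = Y i' := by
  obtain ⟨a, ha⟩ := Option.ne_none_iff_exists'.mp hi.1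
  obtain ⟨b, hb⟩ := Option.ne_none_iff_exists'.mp hi'.1
  obtain ⟨s, hs⟩ := List.exists_filterMap_id_eq_cons (l := List.ofFn X) (i := i) (by simp)
    (by simpa using ha) fun j hj => by simpa using hi.2 ⟨j, by omega⟩ hj
  obtain ⟨t, ht⟩ := List.exists_filterMap_id_eq_cons (l := List.ofFn Y) (i := i') (by simp)
    (by simpa using hb) fun j hj => by simpa using hi'.2 ⟨j, by omega⟩ hj
  have hXY : ((List.ofFn X).filterMap id).Sublist ((List.ofFn Y).filterMap id) := by
    simpa only [List.ofFn_eq_map, List.filterMap_map, Function.id_comp] using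
      List.filterMap_sublist_filterMap_of_forall hsub (List.finRange n)
  rw [altOf_eq_alt, altOf_eq_alt] at halt
  rw [hs, ht] at hXY halt
  rw [ha, hb, List.head_eq_of_cons_sublist_cons_of_alt_eq hXY halt]

/-- If `X ⊆ Y`, `X` is not all zero, and `alt(X) = alt(Y)`, then the first nonzero
entry of `X` equals the first nonzero entry of `Y`. -/
theorem stmt_4 (p n : ℕ) (hp : p.Prime) (X Y : Fin n → Option (Fin p))
    (hsub : ∀ i, X i ≠ none → Y i = X i)
    (hne : ∃ i, X i ≠ none)
    (halt : altOf X = altOf Y)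
    (i i' : Fin n)
    (hi : X i ≠ none ∧ ∀ j, j < i → X j = none)
    (hi' : Y i' ≠ none ∧ ∀ j, j < i' → Y j = none) :
    X i = Y i' :=
  stmt_4_general p n X Y hsub halt i i' hi hi'
end

section
/- For X ∈ {+,-,0}^n with alt(X) ≥ 2k, both X^+ = {i : x_i = +} and X^- = {i : x_i = -} contain a k-element subset S ⊆ [n] that is 2-stable, i.e., any two distinct elements of S are at distance at least 2 apart (and 1 and n do not both belong to S). -/
/-- `altSign X` is the length of the longest alternating subsequence of nonzero signs
in the sign vector `X`. -/
noncomputable def altSign {n : ℕ} (X : Fin n → SignType) : ℕ :=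
  sSup {m | ∃ l : List SignType, l.Chain' (· ≠ ·) ∧ (∀ a ∈ l, a ≠ 0) ∧
    l.Sublist (List.ofFn X) ∧ l.length = m}

/-- `S` (a set of positions among `0,…,n-1`, i.e. of `[n]`) is `2`-stable on the
`n`-cycle: any two distinct elements are at distance at least `2` and at most `n-2`. -/
def CycStable2 {n : ℕ} (S : Finset (Fin n)) : Prop :=
  ∀ i ∈ S, ∀ j ∈ S, (i : ℕ) < (j : ℕ) →
    (i : ℕ) + 2 ≤ (j : ℕ) ∧ (j : ℕ) ≤ (i : ℕ) + n - 2


/-!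
Take an alternating subsequence of `X` of length `2k`, at positions `p₀ < p₁ < ⋯ < p_{2k-1}`.
One of its two parity classes of positions carries `+`, the other `-`, and each class is
`2`-stable on the cycle: two elements of a class are separated by a position of the other
class, and going around the cycle from the last element of the class back to the first one
passes `p_{2k-1}` (even class) or `p₀` (odd class).
-/

lemma exists_alternating_sublist_length_eq_altSign {n : ℕ} (X : Fin n → SignType) :
    ∃ l : List SignType, l.IsChain (· ≠ ·) ∧ (∀ a ∈ l, a ≠ 0) ∧
      l.Sublist (List.ofFn X) ∧ l.length = altSign X := by
  refine (Nat.sSup_mem ⟨0, [], List.isChain_nil, by simp, List.nil_sublist _, rfl⟩ ⟨n, ?_⟩ :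
    altSign X ∈ _)
  rintro m ⟨l, -, -, hsub, rfl⟩
  simpa using hsub.length_le

lemma List.exists_orderEmbedding_of_sublist_ofFn {α : Type*} {n : ℕ} {X : Fin n → α}
    {l : List α} (h : l.Sublist (List.ofFn X)) :
    ∃ p : Fin l.length ↪o Fin n, ∀ t : Fin l.length, X (p t) = l[t] := by
  obtain ⟨f, hf⟩ := List.sublist_iff_exists_fin_orderEmbedding_get_eq.mp h
  exact ⟨f.trans (Fin.castOrderIso List.length_ofFn).toOrderEmbedding,
    fun t => by simpa [Fin.cast] using (hf t).symm⟩

lemma getElem_add_two_mul_of_alternating {l : List SignType} (hl : l.IsChain (· ≠ ·))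
    (hnz : ∀ a ∈ l, a ≠ 0) (i t : ℕ) (h : i + 2 * t < l.length) :
    l[i + 2 * t] = l[i] := by
  have sign_cycle : ∀ a b c : SignType, a ≠ 0 → b ≠ 0 → c ≠ 0 → a ≠ b → b ≠ c → c = a := by
    decide
  induction t with
  | zero => simp
  | succ t ih =>
    have hstep := List.isChain_iff_getElem.mp hl
    rw [← ih (by omega)]
    exact sign_cycle _ _ _ (hnz _ (List.getElem_mem _)) (hnz _ (List.getElem_mem _))
      (hnz _ (List.getElem_mem _)) (hstep _ (by omega)) (hstep (i + 2 * t + 1) (by omega))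

lemma exists_lt_two_getElem_eq_of_alternating {l : List SignType} (hl : l.IsChain (· ≠ ·))
    (hnz : ∀ a ∈ l, a ≠ 0) (hlen : 2 ≤ l.length) {σ : SignType} (hσ : σ ≠ 0) :
    ∃ (r : ℕ) (hr : r < 2), l[r] = σ := by
  have two_signs : ∀ a b : SignType, a ≠ 0 → b ≠ 0 → a ≠ b → σ = a ∨ σ = b := by
    revert hσ σ; decide
  rcases two_signs l[0] l[1] (hnz _ (List.getElem_mem _)) (hnz _ (List.getElem_mem _))
    (List.isChain_iff_getElem.mp hl 0 hlen) with h | h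
  · exact ⟨0, by omega, h.symm⟩
  · exact ⟨1, by omega, h.symm⟩

lemma cycStable2_of_exists_between {n : ℕ} {S : Finset (Fin n)}
    (hbetween : ∀ i ∈ S, ∀ j ∈ S, i < j → ∃ m, i < m ∧ m < j)
    (hwrap : ∀ i ∈ S, ∀ j ∈ S, i < j → ∃ m, m < i ∨ j < m) : CycStable2 S := by
  intro i hi j hj hij
  obtain ⟨m, him, hmj⟩ := hbetween i hi j hj hij
  obtain ⟨m', hm'⟩ := hwrap i hi j hj hij
  simp only [Fin.lt_def] at him hmj hm'
  have := m'.isLt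
  have := j.isLt
  omega

def everyOtherIndex {k m : ℕ} (hm : 2 * k ≤ m) (r : ℕ) (hr : r < 2) (t : Fin k) : Fin m :=
  ⟨2 * t + r, by omega⟩

lemma everyOtherIndex_strictMono {k m : ℕ} (hm : 2 * k ≤ m) (r : ℕ) (hr : r < 2) :
    StrictMono (everyOtherIndex hm r hr) := fun a b hab => by
  simp only [everyOtherIndex, Fin.lt_def] at hab ⊢
  omega

lemma cycStable2_image_everyOtherIndex {k m n : ℕ} (p : Fin m ↪o Fin n) (hm : 2 * k ≤ m)
    (r : ℕ) (hr : r < 2) :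
    CycStable2 (Finset.univ.image fun t => p (everyOtherIndex hm r hr t)) := by
  have hmono : StrictMono fun t => p (everyOtherIndex hm r hr t) :=
    p.strictMono.comp (everyOtherIndex_strictMono hm r hr)
  apply cycStable2_of_exists_between
  all_goals
    simp only [Finset.mem_image, Finset.mem_univ, true_and]
    rintro _ ⟨a, rfl⟩ _ ⟨b, rfl⟩ hpab
    have hab : a < b := hmono.lt_iff_lt.mp hpab
    rw [Fin.lt_def] at hab
  · exact ⟨p ⟨2 * a + r + 1, by omega⟩,
      p.strictMono (by simp [everyOtherIndex, Fin.lt_def]),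
      p.strictMono (by simp [everyOtherIndex, Fin.lt_def]; omega)⟩
  · rcases (by omega : r = 0 ∨ r = 1) with rfl | rfl
    · exact ⟨p ⟨2 * b + 1, by omega⟩,
        .inr (p.strictMono (by simp [everyOtherIndex, Fin.lt_def]))⟩
    · exact ⟨p ⟨0, by omega⟩, .inl (p.strictMono (by simp [everyOtherIndex, Fin.lt_def]))⟩

lemma exists_cycStable2_card_eq_of_two_mul_le_altSign {n k : ℕ} (hk : 1 ≤ k)
    {X : Fin n → SignType} (h : 2 * k ≤ altSign X) {σ : SignType} (hσ : σ ≠ 0) :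
    ∃ S : Finset (Fin n), S.card = k ∧ (∀ i ∈ S, X i = σ) ∧ CycStable2 S := by
  obtain ⟨l, hl, hnz, hsub, hlen⟩ := exists_alternating_sublist_length_eq_altSign X
  obtain ⟨p, hp⟩ := List.exists_orderEmbedding_of_sublist_ofFn hsub
  obtain ⟨r, hr, hσr⟩ := exists_lt_two_getElem_eq_of_alternating hl hnz (by omega) hσ
  have hm : 2 * k ≤ l.length := by omega
  refine ⟨Finset.univ.image fun t => p (everyOtherIndex hm r hr t), ?_, ?_,
    cycStable2_image_everyOtherIndex p hm r hr⟩
  · exact (Finset.card_image_of_injective _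
      (p.injective.comp (everyOtherIndex_strictMono hm r hr).injective)).trans (Finset.card_fin k)
  · simp only [Finset.mem_image, Finset.mem_univ, true_and]
    rintro _ ⟨t, rfl⟩
    rw [hp, ← hσr]
    simpa [everyOtherIndex, add_comm] using
      getElem_add_two_mul_of_alternating hl hnz r t (by omega)

/-- If `alt(X) ≥ 2k`, both the set of plus positions and the set of minus positions
of `X` contain a `2`-stable `k`-subset. -/
theorem stmt_5 (n k : ℕ) (hk : 1 ≤ k) (X : Fin n → SignType)
    (h : 2 * k ≤ altSign X) :
    (∃ S : Finset (Fin n), S.card = k ∧ (∀ i ∈ S, X i = SignType.pos) ∧ CycStable2 S) ∧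
    (∃ S : Finset (Fin n), S.card = k ∧ (∀ i ∈ S, X i = SignType.neg) ∧ CycStable2 S) :=
  ⟨exists_cycStable2_card_eq_of_two_mul_le_altSign hk h (by decide),
    exists_cycStable2_card_eq_of_two_mul_le_altSign hk h (by decide)⟩
end

section
/- (Erdős coloring / upper bound) For n ≥ rk, the Kneser hypergraph KG^r([n] choose k), whose vertices are all k-subsets of [n] and whose edges are the r-tuples of pairwise disjoint k-subsets, admits a proper coloring with ⌈(n-(k-1)r)/(r-1)⌉ colors; hence χ(KG^r([n] choose k)) ≤ ⌈(n-(k-1)r)/(r-1)⌉. -/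
/-- `c` is a proper coloring of the Kneser hypergraph `KG^r([n] choose k)`, whose
vertices are all `k`-subsets of `[n] = {1,…,n}` and whose edges are the `r`-tuples
of pairwise disjoint `k`-subsets. -/
def IsProperColKneser (r n k t : ℕ) (c : Finset ℕ → Fin t) : Prop :=
  ∀ f : Fin r → Finset ℕ, (∀ i, f i ⊆ Finset.Icc 1 n ∧ (f i).card = k) →
    (∀ i j, i ≠ j → Disjoint (f i) (f j)) → ∃ i j, c (f i) ≠ c (f j)

/-!
Erdős' coloring: give a `k`-set `A ⊆ [n]` the color `⌊(min A - 1)/(r-1)⌋`, capping it at the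
last color `s`. The colors below `s` correspond to blocks of `r - 1` consecutive integers, so `r`
disjoint sets of such a color would have `r` distinct minima in a block of size `r - 1`. Sets of
the last color lie in `[s(r-1)+1, n]`, which has fewer than `rk` elements when
`s = ⌈(n-(k-1)r)/(r-1)⌉ - 1`, so it cannot contain `r` disjoint `k`-sets.
-/

/-- The color is irrelevant on the empty set, which is not a vertex for `k ≥ 1`. -/
def erdosColoring (r s : ℕ) (A : Finset ℕ) : Fin (s + 1) :=
  if h : A.Nonempty then ⟨min ((A.min' h - 1) / (r - 1)) s, by omega⟩ else 0

lemma erdosColoring_val {r s : ℕ} {A : Finset ℕ} (h : A.Nonempty) :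
    (erdosColoring r s A : ℕ) = min ((A.min' h - 1) / (r - 1)) s := by
  simp [erdosColoring, h]

lemma subset_Icc_of_erdosColoring_eq_last {r s n : ℕ} {A : Finset ℕ} (h : A.Nonempty)
    (hA : A ⊆ Finset.Icc 1 n) (hc : erdosColoring r s A = Fin.last s) :
    A ⊆ Finset.Icc (s * (r - 1) + 1) n := by
  have hval := erdosColoring_val (r := r) (s := s) h
  rw [hc, Fin.val_last] at hval
  have hmin : s * (r - 1) ≤ A.min' h - 1 := by
    rcases Nat.eq_zero_or_pos (r - 1) with hr | hr
    · simp [hr]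
    · exact (Nat.le_div_iff_mul_le hr).mp (by omega)
  have hmin_pos : 1 ≤ A.min' h := (Finset.mem_Icc.mp (hA (A.min'_mem h))).1
  intro a ha
  have hle := A.min'_le a ha
  exact Finset.mem_Icc.mpr ⟨by omega, (Finset.mem_Icc.mp (hA ha)).2⟩

lemma Finset.card_le_of_forall_sub_one_div_eq {S : Finset ℕ} {d q : ℕ} (hd : 0 < d)
    (hS : ∀ x ∈ S, 1 ≤ x ∧ (x - 1) / d = q) : S.card ≤ d := by
  have hsub : S ⊆ Finset.Icc (q * d + 1) (q * d + d) := by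
    intro x hx
    obtain ⟨hx1, hxq⟩ := hS x hx
    have hlo : q * d ≤ x - 1 := hxq ▸ Nat.div_mul_le_self _ _
    have hhi : x - 1 < (q + 1) * d := (Nat.div_lt_iff_lt_mul hd).mp (by omega)
    rw [Nat.add_mul, one_mul] at hhi
    exact Finset.mem_Icc.mpr ⟨by omega, by omega⟩
  simpa using Finset.card_le_card hsub

theorem isProperColKneser_erdosColoring {n k r s : ℕ} (hk : 1 ≤ k) (hr : 2 ≤ r)
    (hn : n < s * (r - 1) + r * k) : IsProperColKneser r n k (s + 1) (erdosColoring r s) := by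
  intro f hf hdisj
  by_contra! hmono
  have hne : ∀ i, (f i).Nonempty := fun i => Finset.card_pos.mp (by rw [(hf i).2]; omega)
  let i₀ : Fin r := ⟨0, by omega⟩
  set q := erdosColoring r s (f i₀)
  have hcol : ∀ i, erdosColoring r s (f i) = q := fun i => hmono i i₀
  rcases (Fin.le_last q).lt_or_eq with hlow | htop
  · let m : Fin r → ℕ := fun i => (f i).min' (hne i)
    have hm_pos : ∀ i, 1 ≤ m i := fun i =>
      (Finset.mem_Icc.mp ((hf i).1 ((f i).min'_mem (hne i)))).1
    have hm_inj : Function.Injective m := by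
      intro i j hij
      by_contra hne_ij
      exact Finset.disjoint_left.mp (hdisj i j hne_ij) ((f i).min'_mem (hne i))
        (by simpa only [m, hij] using (f j).min'_mem (hne j))
    have hblock : ∀ x ∈ Finset.univ.image m, 1 ≤ x ∧ (x - 1) / (r - 1) = q := by
      simp only [Finset.mem_image, Finset.mem_univ, true_and, forall_exists_index,
        forall_apply_eq_imp_iff]
      intro i
      have hval := erdosColoring_val (r := r) (s := s) (hne i)
      rw [hcol i] at hval
      rw [Fin.lt_def, Fin.val_last] at hlow
      exact ⟨hm_pos i, by simp only [m]; omega⟩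
    have := Finset.card_le_of_forall_sub_one_div_eq (by omega) hblock
    rw [Finset.card_image_of_injective _ hm_inj, Finset.card_univ, Fintype.card_fin] at this
    omega
  · have hsub : Finset.univ.biUnion f ⊆ Finset.Icc (s * (r - 1) + 1) n :=
      Finset.biUnion_subset.mpr fun i _ =>
        subset_Icc_of_erdosColoring_eq_last (hne i) (hf i).1 ((hcol i).trans htop)
    have hcard : (Finset.univ.biUnion f).card = r * k := by
      rw [Finset.card_biUnion fun i _ j _ hij => hdisj i j hij]
      simp [fun i => (hf i).2]
    have := Finset.card_le_card hsub
    rw [hcard, Nat.card_Icc] at this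
    have := Nat.mul_pos (by omega : 0 < r) (by omega : 0 < k)
    omega

lemma le_toNat_ceil_div_mul {α : Type*} [Field α] [LinearOrder α] [IsStrictOrderedRing α]
    [FloorRing α] (x : α) {d : α} (hd : 0 < d) : x ≤ ⌈x / d⌉.toNat * d := by
  calc x = x / d * d := (div_mul_cancel₀ x hd.ne').symm
    _ ≤ (⌈x / d⌉ : α) * d := mul_le_mul_of_nonneg_right (Int.le_ceil _) hd.le
    _ ≤ ((⌈x / d⌉.toNat : ℤ) : α) * d :=
        mul_le_mul_of_nonneg_right (by exact_mod_cast Int.self_le_toNat _) hd.le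
    _ = ⌈x / d⌉.toNat * d := by norm_cast

/-- (Erdős coloring) For `n ≥ rk`, the Kneser hypergraph `KG^r([n] choose k)` admits a
proper coloring with `⌈(n-(k-1)r)/(r-1)⌉` colors; hence its chromatic number is at
most `⌈(n-(k-1)r)/(r-1)⌉`. -/
theorem stmt_10 (n k r : ℕ) (hk : 1 ≤ k) (hr : 2 ≤ r) (hn : r * k ≤ n) :
    ∃ c : Finset ℕ → Fin (⌈((n : ℚ) - ((k : ℚ) - 1) * r) / ((r : ℚ) - 1)⌉.toNat),
      IsProperColKneser r n k _ c := by
  have hr' : (2 : ℚ) ≤ r := by exact_mod_cast hr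
  have hk' : (1 : ℚ) ≤ k := by exact_mod_cast hk
  have hn' : (r : ℚ) * k ≤ n := by exact_mod_cast hn
  have hd : (0 : ℚ) < r - 1 := by linarith
  have hpos : 0 < ⌈((n : ℚ) - ((k : ℚ) - 1) * r) / ((r : ℚ) - 1)⌉.toNat :=
    Int.lt_toNat.mpr (Int.ceil_pos.mpr (div_pos (by nlinarith) hd))
  obtain ⟨s, hs⟩ := Nat.exists_eq_add_one_of_ne_zero hpos.ne'
  have hceil := le_toNat_ceil_div_mul ((n : ℚ) - ((k : ℚ) - 1) * r) hd
  rw [hs] at hceil ⊢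
  have hbound : n < s * (r - 1) + r * k := by
    have : ((s * (r - 1) + r * k : ℕ) : ℚ) = s * ((r : ℚ) - 1) + r * k := by
      push_cast [Nat.cast_sub (by omega : 1 ≤ r)]
      ring
    have hlt : (n : ℚ) < ((s * (r - 1) + r * k : ℕ) : ℚ) := by
      rw [this]
      push_cast at hceil
      linarith
    exact_mod_cast hlt
  exact ⟨erdosColoring r s, isProperColKneser_erdosColoring hk hr hbound⟩
end

section
/- (Multiplicativity lemma) Let r_1, r_2, s_1, s_2 ≥ 1 and r = r_1 r_2, s = s_1 s_2. Suppose that for i = 1, 2 and for all n, k with n ≥ r_i k, the chromatic number of the almost s_i-stable Kneser hypergraph KG^{r_i}([n] choose k)~_{s_i-stab} equals ⌈(n-(k-1)r_i)/(r_i-1)⌉. Then for all n, k with n ≥ rk, the chromatic number of KG^r([n] choose k)~_{s-stab} equals ⌈(n-(k-1)r)/(r-1)⌉. -/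
/-- `S` has all pairwise distances at least `s`. -/
def stab (s : ℕ) (S : Finset ℕ) : Prop :=
  ∀ i ∈ S, ∀ j ∈ S, i ≠ j → i + s ≤ j ∨ j + s ≤ i

/-- `V n k s`: the `k`-subsets of `[n] = {1,…,n}` with pairwise distances at least `s`. -/
def V (n k s : ℕ) : Set (Finset ℕ) :=
  {S | S ⊆ Finset.Icc 1 n ∧ S.card = k ∧ stab s S}

/-- `c` is a proper coloring of `KG^r([n] choose k)~_{s-stab}`. -/
def IsProperCol (r n k s t : ℕ) (c : Finset ℕ → Fin t) : Prop :=
  ∀ f : Fin r → Finset ℕ, (∀ i, f i ∈ V n k s) →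
    (∀ i j, i ≠ j → Disjoint (f i) (f j)) → ∃ i j, c (f i) ≠ c (f j)

/-- The chromatic number of `KG^r([n] choose k)~_{s-stab}` equals
`⌈(n-(k-1)r)/(r-1)⌉`. -/
def ChromEq (r s n k : ℕ) : Prop :=
  IsLeast {t : ℕ | ∃ c : Finset ℕ → Fin t, IsProperCol r n k s t c}
    (⌈((n : ℚ) - ((k : ℚ) - 1) * r) / ((r : ℚ) - 1)⌉.toNat)

/-! The upper bound is the classical colouring: colour a `k`-set by the block of `r - 1`
consecutive integers containing its minimum, merging all blocks from the `v`-th on, where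
`v = ⌈(n-(k-1)r)/(r-1)⌉`.

For the lower bound, let `c` be a colouring of `KG^{r₁r₂}([n] choose k)~_{s₁s₂-stab}` with
`t < ⌈(n-(k-1)r₁r₂)/(r₁r₂-1)⌉` colours and let `m = (k-1)r₂ + t(r₂-1) + 1`. Relabelling `[m]`
by the increasing enumeration of an `s₁`-stable `m`-set `A` turns `s₂`-stable `k`-subsets of `[m]`
into `s₁s₂`-stable `k`-subsets of `A`, so `c` induces a `t`-colouring of
`KG^{r₂}([m] choose k)~_{s₂-stab}`; by the hypothesis for `r₂` it has a monochromatic edge, whose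
colour we give to `A`. The hypothesis for `r₁` yields `r₁` disjoint sets `A` of the same colour,
and the `r₁r₂` relabelled `k`-sets they carry form a monochromatic edge for `c`. -/

open Finset

noncomputable def kneserBound (r n k : ℕ) : ℕ :=
  ⌈((n : ℚ) - ((k : ℚ) - 1) * r) / ((r : ℚ) - 1)⌉.toNat

lemma kneserBound_eq_zero_of_le_one {r : ℕ} (hr : r ≤ 1) (n k : ℕ) : kneserBound r n k = 0 := by
  interval_cases r <;> simp [kneserBound, Int.ceil_le, div_neg]

lemma lt_kneserBound_iff {r k : ℕ} (hr : 2 ≤ r) (hk : 1 ≤ k) {n t : ℕ} :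
    t < kneserBound r n k ↔ t * (r - 1) + (k - 1) * r < n := by
  have hden : (0 : ℚ) < r - 1 := by
    have : (2 : ℚ) ≤ r := by exact_mod_cast hr
    linarith
  rw [kneserBound, Int.lt_toNat, Int.lt_ceil, Int.cast_natCast, lt_div_iff₀ hden,
    lt_sub_iff_add_lt, ← Nat.cast_lt (α := ℚ)]
  push_cast [Nat.cast_sub (by omega : 1 ≤ r), Nat.cast_sub hk]
  rfl

lemma ChromEq.not_isProperCol {r s n k t : ℕ} (h : ChromEq r s n k) (ht : t < kneserBound r n k)
    (c : Finset ℕ → Fin t) : ¬ IsProperCol r n k s t c :=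
  fun hc => (h.2 ⟨c, hc⟩).not_gt ht

lemma ChromEq.kneserBound_pos {r s n k : ℕ} (h : ChromEq r s n k) : 0 < kneserBound r n k :=
  h.1.elim fun c _ => (c ∅).pos

lemma ChromEq.two_le {r s n k : ℕ} (h : ChromEq r s n k) : 2 ≤ r := by
  by_contra! hr
  simpa [kneserBound_eq_zero_of_le_one (Nat.le_of_lt_succ hr)] using h.kneserBound_pos

-- Counted from `1`, with junk value `0` outside `[1, #A]`.
noncomputable def ithSmallest (A : Finset ℕ) (i : ℕ) : ℕ :=
  if h : i - 1 < #A then A.orderEmbOfFin rfl ⟨i - 1, h⟩ else 0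

lemma ithSmallest_mem {A : Finset ℕ} {i : ℕ} (hi : i ∈ Set.Icc 1 #A) : ithSmallest A i ∈ A := by
  rw [ithSmallest, dif_pos (by grind)]
  exact A.orderEmbOfFin_mem rfl _

lemma ithSmallest_strictMonoOn (A : Finset ℕ) : StrictMonoOn (ithSmallest A) (Set.Icc 1 #A) := by
  intro i hi j hj hij
  simp only [ithSmallest, dif_pos (show i - 1 < #A by grind), dif_pos (show j - 1 < #A by grind)]
  exact (A.orderEmbOfFin rfl).strictMono (by simp [Fin.lt_def]; grind)

lemma ithSmallest_injOn (A : Finset ℕ) : Set.InjOn (ithSmallest A) (Set.Icc 1 #A) :=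
  (ithSmallest_strictMonoOn A).injOn

lemma ithSmallest_add_mul_le {A : Finset ℕ} {s : ℕ} (hA : stab s A) {i j : ℕ} (hi : 1 ≤ i)
    (hij : i ≤ j) (hj : j ≤ #A) : ithSmallest A i + s * (j - i) ≤ ithSmallest A j := by
  induction j, hij using Nat.le_induction with
  | base => simp
  | succ j hij ih =>
    have hjA : j ∈ Set.Icc 1 #A := ⟨by omega, by omega⟩
    have hj1A : j + 1 ∈ Set.Icc 1 #A := ⟨by omega, hj⟩
    have hlt := ithSmallest_strictMonoOn A hjA hj1A (by omega)
    have hgap := hA _ (ithSmallest_mem hjA) _ (ithSmallest_mem hj1A) hlt.ne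
    rw [show j + 1 - i = j - i + 1 by omega, Nat.mul_succ]
    have := ih (by omega)
    omega

section Relabel

variable {A B B' : Finset ℕ} {m : ℕ}

lemma image_ithSmallest_subset (hA : #A = m) (hB : B ⊆ Icc 1 m) : B.image (ithSmallest A) ⊆ A :=
  image_subset_iff.mpr fun i hi => ithSmallest_mem (by simpa [hA] using hB hi)

lemma disjoint_image_ithSmallest (hA : #A = m) (hB : B ⊆ Icc 1 m) (hB' : B' ⊆ Icc 1 m)
    (h : Disjoint B B') : Disjoint (B.image (ithSmallest A)) (B'.image (ithSmallest A)) := by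
  have hinj : Set.InjOn (ithSmallest A) (↑B ∪ ↑B') := (ithSmallest_injOn A).mono <| by
    rw [← coe_union, hA, ← coe_Icc]
    exact coe_subset.mpr (union_subset hB hB')
  rw [disjoint_iff_inter_eq_empty, ← image_inter_of_injOn _ _ hinj,
    disjoint_iff_inter_eq_empty.mp h, image_empty]

lemma image_ithSmallest_mem_V {n k s₁ s₂ : ℕ} (hA : A ∈ V n m s₁) (hB : B ∈ V m k s₂) :
    B.image (ithSmallest A) ∈ V n k (s₁ * s₂) := by
  obtain ⟨hAn, hAm, hAs⟩ := hA
  obtain ⟨hBm, hBk, hBs⟩ := hB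
  have hBA : ∀ i ∈ B, i ∈ Set.Icc 1 #A := fun i hi => by simpa [hAm] using hBm hi
  refine ⟨(image_ithSmallest_subset hAm hBm).trans hAn, ?_, ?_⟩
  · rw [card_image_of_injOn ((ithSmallest_injOn A).mono hBA), hBk]
  · have spread : ∀ i ∈ B, ∀ j ∈ B, i + s₂ ≤ j →
        ithSmallest A i + s₁ * s₂ ≤ ithSmallest A j := fun i hi j hj hij =>
      calc ithSmallest A i + s₁ * s₂ ≤ ithSmallest A i + s₁ * (j - i) := by gcongr; omega
        _ ≤ ithSmallest A j := ithSmallest_add_mul_le hAs (hBA i hi).1 (by omega) (hBA j hj).2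
    simp only [stab, mem_image]
    rintro _ ⟨i, hi, rfl⟩ _ ⟨j, hj, rfl⟩ hne
    exact (hBs i hi j hj fun h => hne (h ▸ rfl)).imp (spread i hi j hj) (spread j hj i hi)

end Relabel

lemma not_isProperCol_iff {r n k s t : ℕ} {c : Finset ℕ → Fin t} :
    ¬ IsProperCol r n k s t c ↔ ∃ f : Fin r → Finset ℕ, (∀ i, f i ∈ V n k s) ∧
      (∀ i j, i ≠ j → Disjoint (f i) (f j)) ∧ ∃ col, ∀ i, c (f i) = col := by
  simp only [IsProperCol, not_forall, not_exists, not_not, exists_prop]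
  refine exists_congr fun f => and_congr_right fun _ => and_congr_right fun _ => ?_
  refine ⟨fun h => ?_, fun ⟨col, h⟩ i j => (h i).trans (h j).symm⟩
  rcases isEmpty_or_nonempty (Fin r) with hr | ⟨⟨i₀⟩⟩
  · exact ⟨c ∅, isEmptyElim⟩
  · exact ⟨c (f i₀), fun i => h i i₀⟩

theorem not_isProperCol_mul {r₁ r₂ n m k s₁ s₂ t : ℕ}
    (h₁ : ∀ c : Finset ℕ → Fin t, ¬ IsProperCol r₁ n m s₁ t c)
    (h₂ : ∀ c : Finset ℕ → Fin t, ¬ IsProperCol r₂ m k s₂ t c)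
    (c : Finset ℕ → Fin t) : ¬ IsProperCol (r₁ * r₂) n k (s₁ * s₂) t c := by
  classical
  have inner : ∀ A ∈ V n m s₁, ∃ f : Fin r₂ → Finset ℕ, (∀ i, f i ∈ V m k s₂) ∧
      (∀ i j, i ≠ j → Disjoint (f i) (f j)) ∧ ∃ col, ∀ i, c ((f i).image (ithSmallest A)) = col :=
    fun A _ => not_isProperCol_iff.mp (h₂ fun B => c (B.image (ithSmallest A)))
  choose F hFV hFdisj col hcol using inner
  obtain ⟨M, hMV, hMdisj, col', hcol'⟩ := not_isProperCol_iff.mp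
    (h₁ fun A => if hA : A ∈ V n m s₁ then col A hA else c ∅)
  simp only [dif_pos (hMV _)] at hcol'
  let g (pq : Fin r₁ × Fin r₂) : Finset ℕ := (F (M pq.1) (hMV _) pq.2).image (ithSmallest (M pq.1))
  have hgV (pq) : g pq ∈ V n k (s₁ * s₂) := image_ithSmallest_mem_V (hMV _) (hFV _ _ _)
  have hgsub (pq) : g pq ⊆ M pq.1 :=
    image_ithSmallest_subset (hMV _).2.1 (hFV _ _ _).1
  have hgdisj (pq pq') (hne : pq ≠ pq') : Disjoint (g pq) (g pq') := by
    obtain ⟨p, q⟩ := pq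
    obtain ⟨p', q'⟩ := pq'
    by_cases hp : p = p'
    · subst hp
      exact disjoint_image_ithSmallest (hMV p).2.1 (hFV _ _ q).1 (hFV _ _ q').1
        (hFdisj _ _ q q' fun hq => hne (hq ▸ rfl))
    · exact (hMdisj p p' hp).mono (hgsub _) (hgsub _)
  refine not_isProperCol_iff.mpr ⟨g ∘ finProdFinEquiv.symm, fun x => hgV _,
    fun x y hxy => hgdisj _ _ (finProdFinEquiv.symm.injective.ne hxy), col', fun x => ?_⟩
  exact (hcol _ _ _).trans (hcol' _)

lemma mul_le_card_of_pairwise_disjoint {r k : ℕ} {T : Finset ℕ} {f : Fin r → Finset ℕ}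
    (hcard : ∀ i, #(f i) = k) (hdisj : ∀ i j, i ≠ j → Disjoint (f i) (f j))
    (hT : ∀ i, f i ⊆ T) : r * k ≤ #T :=
  calc r * k = #(univ.biUnion f) := by
        rw [card_biUnion fun i _ j _ hij => hdisj i j hij]; simp [hcard]
    _ ≤ #T := card_le_card (biUnion_subset.mpr fun i _ => hT i)

theorem exists_isProperCol {r n k s v : ℕ} (hr : 2 ≤ r) (hk : 1 ≤ k) (hv : 0 < v)
    (hn : n ≤ v * (r - 1) + (k - 1) * r) : ∃ c : Finset ℕ → Fin v, IsProperCol r n k s v c := by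
  refine ⟨fun S => ⟨min ((sInf (S : Set ℕ) - 1) / (r - 1)) (v - 1), by omega⟩, ?_⟩
  by_contra hmono
  obtain ⟨f, hfV, hdisj, ⟨j, hj⟩, hcol⟩ := not_isProperCol_iff.mp hmono
  simp only [Fin.mk.injEq] at hcol
  have hmin_mem (i) : sInf (f i : Set ℕ) ∈ f i :=
    Nat.sInf_mem (card_pos.mp (by rw [(hfV i).2.1]; omega))
  have hmin_pos (i) : 1 ≤ sInf (f i : Set ℕ) := (mem_Icc.mp ((hfV i).1 (hmin_mem i))).1
  rcases Nat.lt_or_ge j (v - 1) with hjv | hjv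
  · -- all minima lie in a window of `r - 1` consecutive integers, but they are `r` distinct numbers
    have hwindow (i) : {sInf (f i : Set ℕ)} ⊆ Icc (j * (r - 1) + 1) ((j + 1) * (r - 1)) := by
      have hq : (sInf (f i : Set ℕ) - 1) / (r - 1) = j := by have := hcol i; omega
      have h₁ := (Nat.le_div_iff_mul_le (by omega)).mp hq.ge
      have h₂ := (Nat.div_lt_iff_lt_mul (by omega)).mp (hq.trans_lt (by omega : j < j + 1))
      have := hmin_pos i
      rw [singleton_subset_iff, mem_Icc]
      omega
    have hmin_ne (i i') (hii' : i ≠ i') : sInf (f i : Set ℕ) ≠ sInf (f i' : Set ℕ) := fun h =>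
      disjoint_left.mp (hdisj i i' hii') (hmin_mem i) (h ▸ hmin_mem i')
    have := mul_le_card_of_pairwise_disjoint (fun i => card_singleton _)
      (fun i i' hii' => disjoint_singleton.mpr (hmin_ne i i' hii')) hwindow
    rw [Nat.card_Icc, Nat.add_mul, one_mul] at this
    omega
  · -- all sets lie in the last block `[(v - 1)(r - 1) + 1, n]`, which is too short for `r` of them
    have hblock (i) : f i ⊆ Icc ((v - 1) * (r - 1) + 1) n := fun x hx => by
      have hq : v - 1 ≤ (sInf (f i : Set ℕ) - 1) / (r - 1) := by have := hcol i; omega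
      have h₁ := (Nat.le_div_iff_mul_le (by omega)).mp hq
      have h₂ := Nat.sInf_le (s := (f i : Set ℕ)) hx
      have h₃ := mem_Icc.mp ((hfV i).1 hx)
      have := hmin_pos i
      rw [mem_Icc]
      omega
    have := mul_le_card_of_pairwise_disjoint (fun i => (hfV i).2.1) hdisj hblock
    rw [Nat.card_Icc] at this
    have e₁ : (v - 1) * (r - 1) + (r - 1) = v * (r - 1) := by
      rw [← Nat.succ_mul, Nat.succ_eq_add_one, Nat.sub_add_cancel hv]
    have e₂ : (k - 1) * r + r = r * k := by
      rw [← Nat.succ_mul, Nat.succ_eq_add_one, Nat.sub_add_cancel hk, mul_comm]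
    omega

theorem exists_isProperCol_kneserBound {r n k s : ℕ} (hr : 2 ≤ r) (hk : 1 ≤ k) (hn : r * k ≤ n) :
    ∃ c : Finset ℕ → Fin (kneserBound r n k), IsProperCol r n k s _ c := by
  have hpos : 0 * (r - 1) + (k - 1) * r < n :=
    calc 0 * (r - 1) + (k - 1) * r < k * r := by
          rw [zero_mul, zero_add]; exact Nat.mul_lt_mul_of_pos_right (by omega) (by omega)
      _ ≤ n := by rwa [mul_comm]
  exact exists_isProperCol hr hk ((lt_kneserBound_iff hr hk).mpr hpos)
    (not_lt.mp ((lt_kneserBound_iff hr hk).not.mp (lt_irrefl _)))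

-- `(k-1)r₂ + t(r₂-1) + 1` is the least ground-set size on which `KG^{r₂}` needs `t + 1` colours.
lemma intermediate_size_bounds {r₁ r₂ k n t : ℕ} (hr₁ : 1 ≤ r₁) (hr₂ : 1 ≤ r₂) (hk : 1 ≤ k)
    (ht : 1 ≤ t)
    (h : t * (r₁ * r₂ - 1) + (k - 1) * (r₁ * r₂) < n) :
    r₂ * k ≤ (k - 1) * r₂ + t * (r₂ - 1) + 1 ∧ r₁ * ((k - 1) * r₂ + t * (r₂ - 1) + 1) ≤ n ∧
      t * (r₁ - 1) + ((k - 1) * r₂ + t * (r₂ - 1)) * r₁ < n := by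
  obtain ⟨a, rfl⟩ := Nat.exists_eq_add_of_le' hr₁
  obtain ⟨b, rfl⟩ := Nat.exists_eq_add_of_le' hr₂
  obtain ⟨c, rfl⟩ := Nat.exists_eq_add_of_le' hk
  obtain ⟨d, rfl⟩ := Nat.exists_eq_add_of_le' ht
  simp only [Nat.add_sub_cancel] at h ⊢
  rw [show (a + 1) * (b + 1) - 1 = a * b + a + b by ring_nf; omega] at h
  exact ⟨by nlinarith, by nlinarith, by nlinarith⟩

theorem stmt_12_general (r₁ r₂ s₁ s₂ : ℕ)
    (h1 : ∀ n k : ℕ, 1 ≤ k → r₁ * k ≤ n → ChromEq r₁ s₁ n k)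
    (h2 : ∀ n k : ℕ, 1 ≤ k → r₂ * k ≤ n → ChromEq r₂ s₂ n k) :
    ∀ n k : ℕ, 1 ≤ k → (r₁ * r₂) * k ≤ n → ChromEq (r₁ * r₂) (s₁ * s₂) n k := by
  have hr₁ : 2 ≤ r₁ := (h1 _ 1 le_rfl le_rfl).two_le
  have hr₂ : 2 ≤ r₂ := (h2 _ 1 le_rfl le_rfl).two_le
  have hr : 2 ≤ r₁ * r₂ := by nlinarith
  intro n k hk hn
  refine ⟨exists_isProperCol_kneserBound hr hk hn, ?_⟩
  rintro t ⟨c, hc⟩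
  by_contra! ht
  obtain ⟨hm₂, hm₁, hlt⟩ := intermediate_size_bounds (by omega) (by omega) hk (c ∅).pos
    ((lt_kneserBound_iff hr hk).mp ht)
  refine not_isProperCol_mul (m := (k - 1) * r₂ + t * (r₂ - 1) + 1) ?_ ?_ c hc
  · exact (h1 _ _ (by omega) hm₁).not_isProperCol
      ((lt_kneserBound_iff hr₁ (by omega)).mpr (by simpa using hlt))
  · exact (h2 _ _ hk hm₂).not_isProperCol ((lt_kneserBound_iff hr₂ hk).mpr (by omega))

/-- (Multiplicativity lemma) If the chromatic number of the almost `s_i`-stable Kneser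
hypergraph `KG^{r_i}([n] choose k)~_{s_i-stab}` equals `⌈(n-(k-1)r_i)/(r_i-1)⌉`
whenever `n ≥ r_i k` (for `i = 1,2`), then for `r = r_1 r_2` and `s = s_1 s_2` the
chromatic number of `KG^r([n] choose k)~_{s-stab}` equals `⌈(n-(k-1)r)/(r-1)⌉`
whenever `n ≥ rk`. -/
theorem stmt_12 (r₁ r₂ s₁ s₂ : ℕ) (hr₁ : 1 ≤ r₁) (hr₂ : 1 ≤ r₂)
    (hs₁ : 1 ≤ s₁) (hs₂ : 1 ≤ s₂)
    (h1 : ∀ n k : ℕ, 1 ≤ k → r₁ * k ≤ n → ChromEq r₁ s₁ n k)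
    (h2 : ∀ n k : ℕ, 1 ≤ k → r₂ * k ≤ n → ChromEq r₂ s₂ n k) :
    ∀ n k : ℕ, 1 ≤ k → (r₁ * r₂) * k ≤ n → ChromEq (r₁ * r₂) (s₁ * s₂) n k :=
  stmt_12_general r₁ r₂ s₁ s₂ h1 h2
end
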